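/- Under the two-grid assumptions and the condition N(A^{1/2} M̄ A^{1/2}) ∩ N(Pᵀ(I − AM)A^{1/2}) = N(A), one has ‖E_TG‖_A = sqrt(1 − λ_{n−r+1}(F_TG)), where r = rank(A), F_TG := A^{1/2} M̄ A^{1/2} + (I − A^{1/2}MᵀA^{1/2}) Π (I − A^{1/2}MA^{1/2}), and λ_{n−r+1}(·) denotes the (n−r+1)-th smallest eigenvalue counted with multiplicity. -/

import Mathlib

open Matrix

/-- Euclidean norm of a vector in `ℝⁿ`. -/
noncomputable def enorm {n : ℕ} (v : Fin n → ℝ) : ℝ := Real.sqrt (v ⬝ᵥ v)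

/-- The `A`-seminorm `‖v‖_A = sqrt (vᵀ A v)` of a vector. -/
noncomputable def vnorm {n : ℕ} (A : Matrix (Fin n) (Fin n) ℝ) (v : Fin n → ℝ) : ℝ :=
  Real.sqrt (v ⬝ᵥ A.mulVec v)

/-- The `A`-seminorm of a matrix: sup over `v ∉ N(A)` of `‖Xv‖_A / ‖v‖_A`. -/
noncomputable def matNorm {n : ℕ} (A X : Matrix (Fin n) (Fin n) ℝ) : ℝ :=
  sSup ((fun v => vnorm A (X.mulVec v) / vnorm A v) '' {v | A.mulVec v ≠ 0})

/-- Penrose conditions: `X` is the Moore–Penrose inverse of `S`. -/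
def IsMP {m : ℕ} (S X : Matrix (Fin m) (Fin m) ℝ) : Prop :=
  S * X * S = S ∧ X * S * X = X ∧ (S * X)ᵀ = S * X ∧ (X * S)ᵀ = X * S

/-- `eigk S k` is the `k`-th smallest eigenvalue (1-indexed, counted with
multiplicity) of a symmetric matrix `S` (junk value otherwise). -/
noncomputable def eigk {m : ℕ} (S : Matrix (Fin m) (Fin m) ℝ) (k : ℕ) : ℝ :=
  if hS : S.IsHermitian then
    if h : k - 1 < m then hS.eigenvalues (Tuple.sort hS.eigenvalues ⟨k - 1, h⟩) else 0
  else 0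

section
open scoped ComplexOrder

/-- The positive semidefinite square root of a positive semidefinite matrix
(the definition `Matrix.PosSemidef.sqrt` of Mathlib, Dec 2024, removed since). -/
noncomputable def Matrix.PosSemidef.sqrt {n : Type*} [Fintype n] {𝕜 : Type*} [RCLike 𝕜]
    [DecidableEq n] {A : Matrix n n 𝕜} (hA : A.PosSemidef) : Matrix n n 𝕜 :=
  hA.1.eigenvectorUnitary.1 * diagonal ((↑) ∘ (√·) ∘ hA.1.eigenvalues) *
  (star hA.1.eigenvectorUnitary : Matrix n n 𝕜)

end

/-!
Write `S = A^{1/2}`, `L = S M S` and `Π = S P A_c† Pᵀ S`. Since `S E_TG = (I - Π)(I - L) S`, the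
`A`-norm of `E_TG` is the Euclidean norm of `B = (I - Π)(I - L)` on the unit sphere of
`range S = range A`. Uniqueness of the Moore–Penrose inverse makes `A_c†` symmetric, so `Π` is an
orthogonal projection and `F_TG = I - BᵀB`; hence `‖E_TG‖_A² = 1 - m`, where `m` is the minimum of
`wᵀ F_TG w` over unit vectors `w ∈ range A`. The hypothesis `‖I - MA‖_A ≤ 1` makes `B` a
contraction there, so `m ≥ 0`; and `F_TG` vanishes on `N(A) = (range A)ᗮ`, so by Courant–Fischer
`m = λ_{n-r+1}(F_TG)`.
-/

open Module Submodule

namespace IsMP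

variable {m : ℕ} {S X Y : Matrix (Fin m) (Fin m) ℝ}

theorem unique (hX : IsMP S X) (hY : IsMP S Y) : X = Y := by
  obtain ⟨hX1, hX2, hX3, hX4⟩ := hX
  obtain ⟨hY1, hY2, hY3, hY4⟩ := hY
  have hleft : S * X = S * Y :=
    calc S * X = (S * Y * S * X)ᵀ := by rw [hY1, hX3]
      _ = (S * X)ᵀ * (S * Y)ᵀ := by simp only [transpose_mul, Matrix.mul_assoc]
      _ = S * Y := by rw [hX3, hY3, ← Matrix.mul_assoc, hX1]
  have hright : X * S = Y * S :=
    calc X * S = (X * (S * Y * S))ᵀ := by rw [hY1, hX4]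
      _ = (Y * S)ᵀ * (X * S)ᵀ := by simp only [transpose_mul, Matrix.mul_assoc]
      _ = Y * S := by rw [hX4, hY4, Matrix.mul_assoc, ← Matrix.mul_assoc S, hX1]
  rw [← hX2, hright, Matrix.mul_assoc, hleft, ← Matrix.mul_assoc, hY2]

theorem transpose (hX : IsMP S X) : IsMP Sᵀ Xᵀ := by
  obtain ⟨h1, h2, h3, h4⟩ := hX
  refine ⟨?_, ?_, ?_, ?_⟩
  · rw [← transpose_mul, ← transpose_mul, ← Matrix.mul_assoc, h1]
  · rw [← transpose_mul, ← transpose_mul, ← Matrix.mul_assoc, h2]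
  · rw [← transpose_mul, transpose_transpose, h4]
  · rw [← transpose_mul, transpose_transpose, h3]

theorem transpose_eq_self (hS : Sᵀ = S) (hX : IsMP S X) : Xᵀ = X :=
  (hS ▸ hX.transpose).unique hX

end IsMP

section

open scoped ComplexOrder

variable {ι 𝕜 : Type*} [Fintype ι] [DecidableEq ι] [RCLike 𝕜] {A : Matrix ι ι 𝕜}

theorem Matrix.PosSemidef.posSemidef_sqrt (hA : A.PosSemidef) : hA.sqrt.PosSemidef :=
  (posSemidef_diagonal_iff.2 fun i => by simp [Real.sqrt_nonneg]).mul_mul_conjTranspose_same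
    hA.1.eigenvectorUnitary.1

theorem Matrix.PosSemidef.sqrt_mul_self (hA : A.PosSemidef) : hA.sqrt * hA.sqrt = A := by
  have hU : star hA.1.eigenvectorUnitary.1 * hA.1.eigenvectorUnitary.1 = 1 := by simp
  conv_rhs => rw [hA.1.spectral_theorem, Unitary.conjStarAlgAut_apply]
  simp only [Matrix.PosSemidef.sqrt, Matrix.mul_assoc]
  rw [← Matrix.mul_assoc _ hA.1.eigenvectorUnitary.1, hU, Matrix.one_mul,
    ← Matrix.mul_assoc (diagonal _) (diagonal _), diagonal_mul_diagonal]
  congr 3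
  ext i
  simp [← RCLike.ofReal_mul, Real.mul_self_sqrt (hA.eigenvalues_nonneg i)]

end

section

variable {n : ℕ}

theorem mulVec_dotProduct_mulVec_self (Q : Matrix (Fin n) (Fin n) ℝ) (u : Fin n → ℝ) :
    Q *ᵥ u ⬝ᵥ Q *ᵥ u = u ⬝ᵥ (Qᵀ * Q) *ᵥ u := by
  rw [← mulVec_mulVec, dotProduct_mulVec u, ← mulVec_transpose, transpose_transpose]

-- `_root_.enorm` is the Euclidean norm of the statement; plain `enorm` is Mathlib's `‖·‖ₑ`.
theorem sq_enorm (v : Fin n → ℝ) : _root_.enorm v ^ 2 = v ⬝ᵥ v :=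
  Real.sq_sqrt (Finset.sum_nonneg fun i _ => mul_self_nonneg (v i))

theorem enorm_nonneg (v : Fin n → ℝ) : 0 ≤ _root_.enorm v :=
  Real.sqrt_nonneg _

theorem enorm_smul_of_nonneg {c : ℝ} (hc : 0 ≤ c) (v : Fin n → ℝ) :
    _root_.enorm (c • v) = c * _root_.enorm v := by
  rw [_root_.enorm, _root_.enorm, smul_dotProduct, dotProduct_smul, smul_smul, smul_eq_mul,
    Real.sqrt_mul (mul_self_nonneg c), Real.sqrt_mul_self hc]

theorem enorm_pos_of_ne_zero {v : Fin n → ℝ} (hv : v ≠ 0) : 0 < _root_.enorm v :=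
  Real.sqrt_pos.2 <| (Finset.sum_nonneg fun i _ => mul_self_nonneg (v i)).lt_of_ne'
    (dotProduct_self_eq_zero.not.2 hv)

theorem enorm_one_sub_mulVec_le {Q : Matrix (Fin n) (Fin n) ℝ} (hQ : Q.IsSymm)
    (hQ2 : IsIdempotentElem Q) (u : Fin n → ℝ) : _root_.enorm ((1 - Q) *ᵥ u) ≤ _root_.enorm u := by
  have hQQ : Qᵀ * Q = Q := by rw [hQ.eq, hQ2.eq]
  have h1 : (1 - Q)ᵀ * (1 - Q) = 1 - Q := by
    rw [transpose_sub, transpose_one, hQ.eq, sub_mul, mul_sub, mul_sub, hQ2.eq]; simp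
  apply Real.sqrt_le_sqrt
  rw [mulVec_dotProduct_mulVec_self, h1, sub_mulVec, one_mulVec, dotProduct_sub, ← hQQ,
    ← mulVec_dotProduct_mulVec_self, sub_le_self_iff]
  exact Finset.sum_nonneg fun i _ => mul_self_nonneg _

def unitSphereOf (W : Submodule ℝ (Fin n → ℝ)) : Set (Fin n → ℝ) :=
  {w | w ∈ W ∧ w ⬝ᵥ w = 1}

variable {W : Submodule ℝ (Fin n → ℝ)}

theorem isCompact_unitSphereOf (W : Submodule ℝ (Fin n → ℝ)) : IsCompact (unitSphereOf W) := by
  refine Metric.isCompact_of_isClosed_isBounded ?_ ?_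
  · exact W.closed_of_finiteDimensional.inter (isClosed_eq (by fun_prop) continuous_const)
  · refine (Metric.isBounded_iff_subset_closedBall 0).2 ⟨1, fun w hw => ?_⟩
    rw [mem_closedBall_zero_iff, pi_norm_le_iff_of_nonneg zero_le_one]
    intro i
    rw [Real.norm_eq_abs, abs_le_one_iff_mul_self_le_one, ← hw.2]
    exact Finset.single_le_sum (fun j _ => mul_self_nonneg (w j)) (Finset.mem_univ i)

theorem inv_enorm_smul_mem_unitSphereOf {u : Fin n → ℝ} (hu : u ∈ W) (hu0 : u ≠ 0) :
    (_root_.enorm u)⁻¹ • u ∈ unitSphereOf W := by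
  refine ⟨W.smul_mem _ hu, ?_⟩
  rw [smul_dotProduct, dotProduct_smul, smul_smul, ← sq_enorm, smul_eq_mul, ← sq, ← mul_pow,
    inv_mul_cancel₀ (enorm_pos_of_ne_zero hu0).ne', one_pow]

theorem unitSphereOf_nonempty (hW : W ≠ ⊥) : (unitSphereOf W).Nonempty := by
  obtain ⟨u, hu, hu0⟩ := W.ne_bot_iff.1 hW
  exact ⟨_, inv_enorm_smul_mem_unitSphereOf hu hu0⟩

theorem image_enorm_mulVec_div_enorm (C : Matrix (Fin n) (Fin n) ℝ) :
    (fun u => _root_.enorm (C *ᵥ u) / _root_.enorm u) '' {u | u ∈ W ∧ u ≠ 0} =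
      (fun w => _root_.enorm (C *ᵥ w)) '' unitSphereOf W := by
  ext r
  constructor
  · rintro ⟨u, ⟨hu, hu0⟩, rfl⟩
    refine ⟨_, inv_enorm_smul_mem_unitSphereOf hu hu0, ?_⟩
    dsimp only
    rw [mulVec_smul, enorm_smul_of_nonneg (inv_nonneg.2 (enorm_nonneg u)), inv_mul_eq_div]
  · rintro ⟨w, hw, rfl⟩
    have hw1 : _root_.enorm w = 1 := by rw [_root_.enorm, hw.2, Real.sqrt_one]
    refine ⟨w, ⟨hw.1, fun h => ?_⟩, by dsimp only; rw [hw1, div_one]⟩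
    simpa [h] using hw.2

theorem le_rayleigh_of_isMinOn {F : Matrix (Fin n) (Fin n) ℝ} {w₀ : Fin n → ℝ}
    (hmin : IsMinOn (fun w => w ⬝ᵥ F *ᵥ w) (unitSphereOf W) w₀) {u : Fin n → ℝ} (hu : u ∈ W) :
    (w₀ ⬝ᵥ F *ᵥ w₀) * (u ⬝ᵥ u) ≤ u ⬝ᵥ F *ᵥ u := by
  rcases eq_or_ne u 0 with rfl | hu0
  · simp
  have hpos := enorm_pos_of_ne_zero hu0
  have h := isMinOn_iff.1 hmin _ (inv_enorm_smul_mem_unitSphereOf hu hu0)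
  rw [mulVec_smul, smul_dotProduct, dotProduct_smul, smul_smul, smul_eq_mul, ← sq, inv_pow,
    ← div_eq_inv_mul, le_div_iff₀ (pow_pos hpos 2), sq_enorm] at h
  exact h

end

namespace Matrix.PosSemidef

variable {n : ℕ} {A : Matrix (Fin n) (Fin n) ℝ} (hA : A.PosSemidef)

theorem transpose_sqrt : hA.sqrtᵀ = hA.sqrt :=
  (isHermitian_iff_isSymm.1 hA.posSemidef_sqrt.1).eq

theorem dotProduct_mulVec_eq (v : Fin n → ℝ) :
    v ⬝ᵥ A *ᵥ v = hA.sqrt *ᵥ v ⬝ᵥ hA.sqrt *ᵥ v := by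
  rw [mulVec_dotProduct_mulVec_self, hA.transpose_sqrt, hA.sqrt_mul_self]

theorem vnorm_eq (v : Fin n → ℝ) : vnorm A v = _root_.enorm (hA.sqrt *ᵥ v) := by
  rw [vnorm, hA.dotProduct_mulVec_eq, _root_.enorm]

theorem sqrt_mulVec_eq_zero_iff {v : Fin n → ℝ} : hA.sqrt *ᵥ v = 0 ↔ A *ᵥ v = 0 := by
  refine ⟨fun h => by rw [← hA.sqrt_mul_self, ← mulVec_mulVec, h, mulVec_zero], fun h => ?_⟩
  rw [← dotProduct_self_eq_zero, ← hA.dotProduct_mulVec_eq, h, dotProduct_zero]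

theorem range_sqrt : LinearMap.range hA.sqrt.mulVecLin = LinearMap.range A.mulVecLin := by
  refine (Submodule.eq_of_le_of_finrank_eq ?_ ?_).symm
  · rintro _ ⟨v, rfl⟩
    exact ⟨hA.sqrt *ᵥ v, by simp [← hA.sqrt_mul_self]⟩
  · change A.rank = hA.sqrt.rank
    rw [← rank_transpose_mul_self hA.sqrt, hA.transpose_sqrt, hA.sqrt_mul_self]

theorem image_sqrt_mulVec :
    (hA.sqrt *ᵥ ·) '' {v | A *ᵥ v ≠ 0} = {u | u ∈ LinearMap.range A.mulVecLin ∧ u ≠ 0} := by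
  rw [← hA.range_sqrt]
  ext u
  constructor
  · rintro ⟨v, hv, rfl⟩
    exact ⟨⟨v, rfl⟩, hA.sqrt_mulVec_eq_zero_iff.not.2 hv⟩
  · rintro ⟨⟨v, rfl⟩, hu⟩
    exact ⟨v, hA.sqrt_mulVec_eq_zero_iff.not.1 hu, rfl⟩

end Matrix.PosSemidef

section

variable {n : ℕ} {A X C : Matrix (Fin n) (Fin n) ℝ}

theorem matNorm_eq_sSup (hA : A.PosSemidef) (hXC : hA.sqrt * X = C * hA.sqrt) :
    matNorm A X =
      sSup ((fun w => _root_.enorm (C *ᵥ w)) '' unitSphereOf (LinearMap.range A.mulVecLin)) := by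
  have hratio : (fun v => vnorm A (X *ᵥ v) / vnorm A v) =
      (fun u => _root_.enorm (C *ᵥ u) / _root_.enorm u) ∘ (hA.sqrt *ᵥ ·) := by
    ext v
    simp only [Function.comp_apply, hA.vnorm_eq, mulVec_mulVec, hXC]
  rw [matNorm, hratio, Set.image_comp, hA.image_sqrt_mulVec, image_enorm_mulVec_div_enorm]

theorem enorm_mulVec_le_of_matNorm_le (hA : A.PosSemidef) (hXC : hA.sqrt * X = C * hA.sqrt)
    {c : ℝ} (h : matNorm A X ≤ c) {w : Fin n → ℝ}
    (hw : w ∈ unitSphereOf (LinearMap.range A.mulVecLin)) : _root_.enorm (C *ᵥ w) ≤ c := by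
  rw [matNorm_eq_sSup hA hXC] at h
  refine le_trans (le_csSup ?_ (Set.mem_image_of_mem (fun w => _root_.enorm (C *ᵥ w)) hw)) h
  exact (isCompact_unitSphereOf _).bddAbove_image (by unfold _root_.enorm; fun_prop)

end

theorem Submodule.exists_mem_mem_ne_zero_of_lt_finrank_add {K V : Type*} [DivisionRing K]
    [AddCommGroup V] [Module K V] [FiniteDimensional K V] {s t : Submodule K V}
    (h : finrank K V < finrank K s + finrank K t) : ∃ x ∈ s, x ∈ t ∧ x ≠ 0 := by
  by_contra! hst
  exact h.not_ge (Submodule.finrank_add_finrank_le_of_disjoint (Submodule.disjoint_def.2 hst))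

namespace Matrix.IsHermitian

variable {n : ℕ} {F : Matrix (Fin n) (Fin n) ℝ} (hF : F.IsHermitian)

local notation "U" => (Matrix.IsHermitian.eigenvectorUnitary hF : Matrix (Fin n) (Fin n) ℝ)

theorem eigenvectorUnitary_mul_transpose : U * Uᵀ = 1 := by
  simpa [star_eq_conjTranspose] using Unitary.coe_mul_star_self hF.eigenvectorUnitary

theorem eq_eigenvectorUnitary_mul_diagonal_mul_transpose :
    F = U * diagonal hF.eigenvalues * Uᵀ := by
  conv_lhs => rw [hF.spectral_theorem, Unitary.conjStarAlgAut_apply]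
  simp [star_eq_conjTranspose, RCLike.ofReal_real_eq_id]

theorem transpose_mul_eigenvectorUnitary : Uᵀ * U = 1 := by
  simpa [star_eq_conjTranspose] using Unitary.coe_star_mul_self hF.eigenvectorUnitary

theorem dotProduct_self_eq_sum (u : Fin n → ℝ) : u ⬝ᵥ u = ∑ i, (Uᵀ *ᵥ u) i ^ 2 := by
  have h : u ⬝ᵥ u = u ⬝ᵥ (U * Uᵀ) *ᵥ u := by rw [hF.eigenvectorUnitary_mul_transpose, one_mulVec]
  rw [h, ← mulVec_mulVec, dotProduct_mulVec, ← mulVec_transpose, dotProduct]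
  simp only [sq]

theorem dotProduct_mulVec_eq_sum (u : Fin n → ℝ) :
    u ⬝ᵥ F *ᵥ u = ∑ i, hF.eigenvalues i * (Uᵀ *ᵥ u) i ^ 2 := by
  conv_lhs => rw [hF.eq_eigenvectorUnitary_mul_diagonal_mul_transpose]
  rw [← mulVec_mulVec, ← mulVec_mulVec, dotProduct_mulVec, ← mulVec_transpose, dotProduct]
  exact Finset.sum_congr rfl fun i _ => by rw [mulVec_diagonal]; ring

def eigenspan (T : Finset (Fin n)) : Submodule ℝ (Fin n → ℝ) :=
  span ℝ ((fun i => ⇑(hF.eigenvectorBasis i)) '' T)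

theorem finrank_eigenspan (T : Finset (Fin n)) : finrank ℝ (hF.eigenspan T) = T.card := by
  have hli : LinearIndependent ℝ fun i : T => ⇑(hF.eigenvectorBasis i) := by
    simp_rw [← eigenvectorUnitary_col_eq]
    exact (linearIndependent_cols_iff_isUnit.2 Unitary.isUnit_coe).comp _ Subtype.val_injective
  rw [eigenspan, Set.image_eq_range]
  exact (finrank_span_eq_card hli).trans (Fintype.card_coe T)

theorem transpose_mulVec_eq_zero_of_mem_eigenspan {T : Finset (Fin n)} {u : Fin n → ℝ}
    (hu : u ∈ hF.eigenspan T) {j : Fin n} (hj : j ∉ T) : (Uᵀ *ᵥ u) j = 0 := by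
  induction hu using span_induction with
  | mem x hx =>
    obtain ⟨i, hi, rfl⟩ := hx
    have hji : j ≠ i := fun h => hj (h ▸ hi)
    dsimp only
    rw [← eigenvectorUnitary_col_eq, ← mulVec_single_one, mulVec_mulVec,
      hF.transpose_mul_eigenvectorUnitary, one_mulVec, Pi.single_eq_of_ne hji]
  | zero => simp
  | add x y _ _ hx hy => simp [mulVec_add, hx, hy]
  | smul a x _ hx => simp [mulVec_smul, hx]

theorem sum_mul_sq_pos_of_mem_eigenspan {T : Finset (Fin n)} {c : Fin n → ℝ}
    (hc : ∀ i ∈ T, 0 < c i) {u : Fin n → ℝ} (hu : u ∈ hF.eigenspan T) (hu0 : u ≠ 0) :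
    0 < ∑ i, c i * (Uᵀ *ᵥ u) i ^ 2 := by
  have hcoord : Uᵀ *ᵥ u ≠ 0 := fun h => hu0 <| by
    rw [← one_mulVec u, ← hF.eigenvectorUnitary_mul_transpose, ← mulVec_mulVec, h, mulVec_zero]
  obtain ⟨j, hj⟩ := Function.ne_iff.1 hcoord
  have hjT : j ∈ T := by
    by_contra hjT
    exact hj (hF.transpose_mulVec_eq_zero_of_mem_eigenspan hu hjT)
  refine Finset.sum_pos' (fun i _ => ?_)
    ⟨j, Finset.mem_univ j, mul_pos (hc j hjT) (pow_two_pos_of_ne_zero hj)⟩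
  by_cases hi : i ∈ T
  · exact mul_nonneg (hc i hi).le (sq_nonneg _)
  · simp [hF.transpose_mulVec_eq_zero_of_mem_eigenspan hu hi]

theorem lt_rayleigh_of_mem_eigenspan {T : Finset (Fin n)} {x : ℝ}
    (hT : ∀ i ∈ T, x < hF.eigenvalues i) {u : Fin n → ℝ} (hu : u ∈ hF.eigenspan T) (hu0 : u ≠ 0) :
    x * (u ⬝ᵥ u) < u ⬝ᵥ F *ᵥ u := by
  have h := hF.sum_mul_sq_pos_of_mem_eigenspan (c := fun i => hF.eigenvalues i - x)
    (fun i hi => sub_pos.2 (hT i hi)) hu hu0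
  rw [hF.dotProduct_mulVec_eq_sum, hF.dotProduct_self_eq_sum, Finset.mul_sum]
  simp only [sub_mul, Finset.sum_sub_distrib] at h
  linarith

theorem rayleigh_lt_of_mem_eigenspan {T : Finset (Fin n)} {x : ℝ}
    (hT : ∀ i ∈ T, hF.eigenvalues i < x) {u : Fin n → ℝ} (hu : u ∈ hF.eigenspan T) (hu0 : u ≠ 0) :
    u ⬝ᵥ F *ᵥ u < x * (u ⬝ᵥ u) := by
  have h := hF.sum_mul_sq_pos_of_mem_eigenspan (c := fun i => x - hF.eigenvalues i)
    (fun i hi => sub_pos.2 (hT i hi)) hu hu0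
  rw [hF.dotProduct_mulVec_eq_sum, hF.dotProduct_self_eq_sum, Finset.mul_sum]
  simp only [sub_mul, Finset.sum_sub_distrib] at h
  linarith

theorem eigk_le_of_forall_mem (hF : F.IsHermitian) {k : ℕ} (hk : 1 ≤ k) (hkn : k ≤ n)
    {V : Submodule ℝ (Fin n → ℝ)} (hV : k ≤ finrank ℝ V) {x : ℝ}
    (hx : ∀ u ∈ V, u ⬝ᵥ F *ᵥ u ≤ x * (u ⬝ᵥ u)) :
    eigk F k ≤ x := by
  have hk' : k - 1 < n := by omega
  rw [eigk, dif_pos hF, dif_pos hk']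
  by_contra! hlt
  set σ := Tuple.sort hF.eigenvalues
  set T := (Finset.Ici (⟨k - 1, hk'⟩ : Fin n)).map σ.toEmbedding
  have hT : ∀ i ∈ T, x < hF.eigenvalues i := by
    simp only [T, Finset.mem_map, Finset.mem_Ici, Equiv.coe_toEmbedding]
    rintro _ ⟨j, hj, rfl⟩
    exact hlt.trans_le (Tuple.monotone_sort hF.eigenvalues hj)
  obtain ⟨u, huV, huT, hu0⟩ := Submodule.exists_mem_mem_ne_zero_of_lt_finrank_add
    (s := V) (t := hF.eigenspan T) <| by
      rw [finrank_fin_fun, hF.finrank_eigenspan, Finset.card_map, Fin.card_Ici, Fin.val_mk]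
      omega
  exact (hx u huV).not_gt (hF.lt_rayleigh_of_mem_eigenspan hT huT hu0)

theorem le_eigk_of_forall_mem (hF : F.IsHermitian) {k : ℕ} (hkn : k ≤ n)
    {V : Submodule ℝ (Fin n → ℝ)} (hV : n - k + 1 ≤ finrank ℝ V) {x : ℝ}
    (hx : ∀ u ∈ V, x * (u ⬝ᵥ u) ≤ u ⬝ᵥ F *ᵥ u) :
    x ≤ eigk F k := by
  have hVn : finrank ℝ V ≤ n := (Submodule.finrank_le V).trans_eq (finrank_fin_fun ℝ)
  have hk' : k - 1 < n := by omega
  rw [eigk, dif_pos hF, dif_pos hk']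
  by_contra! hlt
  set σ := Tuple.sort hF.eigenvalues
  set T := (Finset.Iic (⟨k - 1, hk'⟩ : Fin n)).map σ.toEmbedding
  have hT : ∀ i ∈ T, hF.eigenvalues i < x := by
    simp only [T, Finset.mem_map, Finset.mem_Iic, Equiv.coe_toEmbedding]
    rintro _ ⟨j, hj, rfl⟩
    exact (Tuple.monotone_sort hF.eigenvalues hj).trans_lt hlt
  obtain ⟨u, huV, huT, hu0⟩ := Submodule.exists_mem_mem_ne_zero_of_lt_finrank_add
    (s := V) (t := hF.eigenspan T) <| by
      rw [finrank_fin_fun, hF.finrank_eigenspan, Finset.card_map, Fin.card_Iic, Fin.val_mk]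
      omega
  exact (hx u huV).not_gt (hF.rayleigh_lt_of_mem_eigenspan hT huT hu0)

end Matrix.IsHermitian

section

variable {n : ℕ} {A F : Matrix (Fin n) (Fin n) ℝ}

theorem dotProduct_eq_zero_of_mulVec_eq_zero_of_mem_range (hA : A.IsSymm) {z w : Fin n → ℝ}
    (hz : A *ᵥ z = 0) (hw : w ∈ LinearMap.range A.mulVecLin) : z ⬝ᵥ w = 0 := by
  obtain ⟨v, rfl⟩ := hw
  rw [mulVecLin_apply, dotProduct_mulVec, ← mulVec_transpose, hA.eq, hz, zero_dotProduct]

theorem rayleigh_le_of_mem_ker_sup_span (hA : A.IsSymm) (hF : F.IsSymm)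
    (hker : ∀ z, A *ᵥ z = 0 → F *ᵥ z = 0) {w₀ : Fin n → ℝ}
    (hw₀ : w₀ ∈ unitSphereOf (LinearMap.range A.mulVecLin)) (hm : 0 ≤ w₀ ⬝ᵥ F *ᵥ w₀)
    {u : Fin n → ℝ} (hu : u ∈ LinearMap.ker A.mulVecLin ⊔ span ℝ {w₀}) :
    u ⬝ᵥ F *ᵥ u ≤ (w₀ ⬝ᵥ F *ᵥ w₀) * (u ⬝ᵥ u) := by
  obtain ⟨z, hz, _, hy, rfl⟩ := Submodule.mem_sup.1 hu
  obtain ⟨c, rfl⟩ := Submodule.mem_span_singleton.1 hy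
  have hAz : A *ᵥ z = 0 := hz
  have hFz := hker z hAz
  have hzw : z ⬝ᵥ w₀ = 0 := dotProduct_eq_zero_of_mulVec_eq_zero_of_mem_range hA hAz hw₀.1
  have hzFw : z ⬝ᵥ F *ᵥ w₀ = 0 := by
    rw [dotProduct_mulVec, ← mulVec_transpose, hF.eq, hFz, zero_dotProduct]
  have hquad : (z + c • w₀) ⬝ᵥ F *ᵥ (z + c • w₀) = c ^ 2 * (w₀ ⬝ᵥ F *ᵥ w₀) := by
    simp only [mulVec_add, mulVec_smul, hFz, dotProduct_add, add_dotProduct, dotProduct_smul,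
      smul_dotProduct, hzFw, dotProduct_zero, smul_eq_mul]
    ring
  have hnorm : (z + c • w₀) ⬝ᵥ (z + c • w₀) = z ⬝ᵥ z + c ^ 2 := by
    simp only [dotProduct_add, add_dotProduct, dotProduct_smul, smul_dotProduct, hzw,
      dotProduct_comm w₀ z, hw₀.2, smul_eq_mul]
    ring
  have hzz : 0 ≤ z ⬝ᵥ z := Finset.sum_nonneg fun i _ => mul_self_nonneg (z i)
  rw [hquad, hnorm, mul_add]
  linarith [mul_nonneg hm hzz]

/-- Courant–Fischer: the eigenvalues of `F` on `N(A) = (range A)ᗮ` are zero, so a nonnegative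
minimum of the Rayleigh quotient of `F` on `range A` is its `(n - rank A + 1)`-th smallest
eigenvalue. -/
theorem eigk_eq_of_isMinOn (hA : A.IsSymm) (hF : F.IsHermitian)
    (hker : ∀ z, A *ᵥ z = 0 → F *ᵥ z = 0) {w₀ : Fin n → ℝ}
    (hw₀ : w₀ ∈ unitSphereOf (LinearMap.range A.mulVecLin))
    (hmin : IsMinOn (fun w => w ⬝ᵥ F *ᵥ w) (unitSphereOf (LinearMap.range A.mulVecLin)) w₀)
    (hm : 0 ≤ w₀ ⬝ᵥ F *ᵥ w₀) :
    eigk F (n - A.rank + 1) = w₀ ⬝ᵥ F *ᵥ w₀ := by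
  have hw₀0 : w₀ ≠ 0 := fun h => by simpa [h] using hw₀.2
  have hrank : A.rank + finrank ℝ (LinearMap.ker A.mulVecLin) = n :=
    (LinearMap.finrank_range_add_finrank_ker _).trans (finrank_fin_fun ℝ)
  have hr : A.rank ≠ 0 := fun h =>
    hw₀0 ((Submodule.mem_bot ℝ).1 (Submodule.finrank_eq_zero.1 h ▸ hw₀.1))
  have hdisj : Disjoint (LinearMap.ker A.mulVecLin) (span ℝ {w₀}) := by
    refine Submodule.disjoint_def.2 fun u hu hw => ?_
    obtain ⟨c, rfl⟩ := Submodule.mem_span_singleton.1 hw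
    exact dotProduct_self_eq_zero.1
      (dotProduct_eq_zero_of_mulVec_eq_zero_of_mem_range hA hu (Submodule.smul_mem _ c hw₀.1))
  have hsup : finrank ℝ ↥(LinearMap.ker A.mulVecLin ⊔ span ℝ {w₀}) = n - A.rank + 1 := by
    have := Submodule.finrank_sup_add_finrank_inf_eq (LinearMap.ker A.mulVecLin) (span ℝ {w₀})
    rw [hdisj.eq_bot, finrank_bot, finrank_span_singleton hw₀0] at this
    omega
  apply le_antisymm
  · exact hF.eigk_le_of_forall_mem (by omega) (by omega) hsup.ge fun u hu =>
      rayleigh_le_of_mem_ker_sup_span hA (isHermitian_iff_isSymm.1 hF) hker hw₀ hm hu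
  · exact hF.le_eigk_of_forall_mem (by omega) (by change _ ≤ A.rank; omega) fun u hu =>
      le_rayleigh_of_isMinOn hmin hu

end

section

variable {n : ℕ} {A : Matrix (Fin n) (Fin n) ℝ}

theorem sSup_enorm_mulVec_eq_sqrt_one_sub_eigk (hA : A.IsSymm) (hA0 : A ≠ 0)
    {B : Matrix (Fin n) (Fin n) ℝ}
    (hB : ∀ w ∈ unitSphereOf (LinearMap.range A.mulVecLin), _root_.enorm (B *ᵥ w) ≤ 1)
    (hker : ∀ z, A *ᵥ z = 0 → (1 - Bᵀ * B) *ᵥ z = 0) :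
    sSup ((fun w => _root_.enorm (B *ᵥ w)) '' unitSphereOf (LinearMap.range A.mulVecLin)) =
      √(1 - eigk (1 - Bᵀ * B) (n - A.rank + 1)) := by
  set K := unitSphereOf (LinearMap.range A.mulVecLin)
  have hF : (1 - Bᵀ * B).IsHermitian := isHermitian_iff_isSymm.2 <| by
    simp [IsSymm, transpose_sub]
  have hray : ∀ w ∈ K, w ⬝ᵥ (1 - Bᵀ * B) *ᵥ w = 1 - _root_.enorm (B *ᵥ w) ^ 2 := fun w hw => by
    rw [sub_mulVec, one_mulVec, dotProduct_sub, hw.2, sq_enorm, mulVec_dotProduct_mulVec_self]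
  have hK : K.Nonempty := unitSphereOf_nonempty <| by
    rw [Ne, LinearMap.range_eq_bot, ← Matrix.toLin'_apply', map_eq_zero_iff _ toLin'.injective]
    exact hA0
  obtain ⟨w₀, hw₀, hmin⟩ := (isCompact_unitSphereOf _).exists_isMinOn hK
    (Continuous.continuousOn (by fun_prop) : ContinuousOn (fun w => w ⬝ᵥ (1 - Bᵀ * B) *ᵥ w) K)
  have hm : 0 ≤ w₀ ⬝ᵥ (1 - Bᵀ * B) *ᵥ w₀ := by
    rw [hray w₀ hw₀, sub_nonneg]
    exact pow_le_one₀ (enorm_nonneg _) (hB w₀ hw₀)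
  have hnorm : ∀ w ∈ K, _root_.enorm (B *ᵥ w) = √(1 - w ⬝ᵥ (1 - Bᵀ * B) *ᵥ w) := fun w hw => by
    rw [hray w hw, sub_sub_cancel, Real.sqrt_sq (enorm_nonneg _)]
  rw [eigk_eq_of_isMinOn hA hF hker hw₀ hmin hm]
  refine IsGreatest.csSup_eq ⟨⟨w₀, hw₀, hnorm w₀ hw₀⟩, ?_⟩
  rintro _ ⟨w, hw, rfl⟩
  dsimp only
  rw [hnorm w hw]
  exact Real.sqrt_le_sqrt (by linarith [isMinOn_iff.1 hmin w hw])

end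

section

variable {n nc : ℕ} {A S : Matrix (Fin n) (Fin n) ℝ} {P : Matrix (Fin n) (Fin nc) ℝ}
  {X : Matrix (Fin nc) (Fin nc) ℝ}

theorem IsMP.isSymm_mul_mul (hS : S.IsSymm) (hA : A.IsSymm) (hX : IsMP (Pᵀ * A * P) X) :
    (S * P * X * Pᵀ * S).IsSymm := by
  have hXt : Xᵀ = X := hX.transpose_eq_self (by simp [transpose_mul, hA.eq, Matrix.mul_assoc])
  simp [IsSymm, transpose_mul, hS.eq, hXt, Matrix.mul_assoc]

theorem IsMP.isIdempotentElem_mul_mul (hSS : S * S = A) (hX : IsMP (Pᵀ * A * P) X) :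
    IsIdempotentElem (S * P * X * Pᵀ * S) := by
  calc S * P * X * Pᵀ * S * (S * P * X * Pᵀ * S)
      = S * P * (X * (Pᵀ * (S * S) * P) * X) * Pᵀ * S := by simp only [Matrix.mul_assoc]
    _ = S * P * X * Pᵀ * S := by rw [hSS, hX.2.1]

theorem sqrt_mul_one_sub_mul (hSS : S * S = A) (M : Matrix (Fin n) (Fin n) ℝ) :
    S * (1 - M * A) = (1 - S * M * S) * S := by
  subst hSS
  noncomm_ring

theorem twoGrid_eq_one_sub_transpose_mul_self (hSS : S * S = A) (hS : S.IsSymm)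
    {Q : Matrix (Fin n) (Fin n) ℝ} (hQ : Q.IsSymm) (hQ2 : IsIdempotentElem Q)
    (M : Matrix (Fin n) (Fin n) ℝ) :
    S * (M + Mᵀ - Mᵀ * A * M) * S + (1 - S * Mᵀ * S) * Q * (1 - S * M * S) =
      1 - ((1 - Q) * (1 - S * M * S))ᵀ * ((1 - Q) * (1 - S * M * S)) := by
  have hBt : ((1 - Q) * (1 - S * M * S))ᵀ = (1 - S * Mᵀ * S) * (1 - Q) := by
    simp [transpose_mul, transpose_sub, hQ.eq, hS.eq, Matrix.mul_assoc]
  rw [hBt, Matrix.mul_assoc (1 - S * Mᵀ * S) (1 - Q), ← Matrix.mul_assoc (1 - Q) (1 - Q),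
    hQ2.one_sub.eq]
  subst hSS
  noncomm_ring

theorem twoGrid_mulVec_eq_zero_of_sqrt_mulVec_eq_zero (hSS : S * S = A)
    (M Q : Matrix (Fin n) (Fin n) ℝ) {z : Fin n → ℝ} (hz : S *ᵥ z = 0) :
    (S * (M + Mᵀ - Mᵀ * A * M) * S + (1 - S * Mᵀ * S) * (S * Q * S) * (1 - S * M * S)) *ᵥ z =
      0 := by
  have hfactor : S * (M + Mᵀ - Mᵀ * A * M) * S + (1 - S * Mᵀ * S) * (S * Q * S) * (1 - S * M * S) =
      (S * (M + Mᵀ - Mᵀ * A * M) + (1 - S * Mᵀ * S) * S * Q * (1 - A * M)) * S := by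
    subst hSS
    noncomm_ring
  rw [hfactor, ← mulVec_mulVec, hz, mulVec_zero]

end

theorem stmt8_general {n nc : ℕ}
    (A M : Matrix (Fin n) (Fin n) ℝ) (P : Matrix (Fin n) (Fin nc) ℝ)
    (hA : A.PosSemidef) (hA0 : A ≠ 0)
    (hM : matNorm A (1 - M * A) ≤ 1)
    (Acd : Matrix (Fin nc) (Fin nc) ℝ) (hAcd : IsMP (Pᵀ * A * P) Acd)
    (Pi F : Matrix (Fin n) (Fin n) ℝ)
    (hPi : Pi = hA.sqrt * P * Acd * Pᵀ * hA.sqrt)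
    (hF : F = hA.sqrt * (M + Mᵀ - Mᵀ * A * M) * hA.sqrt +
      (1 - hA.sqrt * Mᵀ * hA.sqrt) * Pi * (1 - hA.sqrt * M * hA.sqrt)) :
    matNorm A ((1 - P * Acd * Pᵀ * A) * (1 - M * A)) =
      Real.sqrt (1 - eigk F (n - A.rank + 1)) := by
  have hSS := hA.sqrt_mul_self
  have hAs : A.IsSymm := isHermitian_iff_isSymm.1 hA.1
  have hPis : Pi.IsSymm := hPi ▸ hAcd.isSymm_mul_mul hA.transpose_sqrt hAs
  have hPi2 : IsIdempotentElem Pi := hPi ▸ hAcd.isIdempotentElem_mul_mul hSS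
  have hFB := hF.trans (twoGrid_eq_one_sub_transpose_mul_self hSS hA.transpose_sqrt hPis hPi2 M)
  have hE : hA.sqrt * ((1 - P * Acd * Pᵀ * A) * (1 - M * A)) =
      (1 - Pi) * (1 - hA.sqrt * M * hA.sqrt) * hA.sqrt := by
    rw [← Matrix.mul_assoc, sqrt_mul_one_sub_mul hSS, Matrix.mul_assoc,
      sqrt_mul_one_sub_mul hSS, ← Matrix.mul_assoc, hPi]
    simp only [Matrix.mul_assoc]
  have hB : ∀ w ∈ unitSphereOf (LinearMap.range A.mulVecLin),
      _root_.enorm (((1 - Pi) * (1 - hA.sqrt * M * hA.sqrt)) *ᵥ w) ≤ 1 := fun w hw => by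
    rw [← mulVec_mulVec]
    exact (enorm_one_sub_mulVec_le hPis hPi2 _).trans
      (enorm_mulVec_le_of_matNorm_le hA (sqrt_mul_one_sub_mul hSS M) hM hw)
  have hker : ∀ z, A *ᵥ z = 0 → F *ᵥ z = 0 := fun z hz => by
    rw [hF, hPi, show hA.sqrt * P * Acd * Pᵀ * hA.sqrt = hA.sqrt * (P * Acd * Pᵀ) * hA.sqrt by
      simp only [Matrix.mul_assoc]]
    exact twoGrid_mulVec_eq_zero_of_sqrt_mulVec_eq_zero hSS M _ (hA.sqrt_mulVec_eq_zero_iff.2 hz)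
  rw [matNorm_eq_sSup hA hE, sSup_enorm_mulVec_eq_sqrt_one_sub_eigk hAs hA0 hB (hFB ▸ hker), hFB]

theorem stmt8 {n nc : ℕ} (hn : nc < n)
    (A M : Matrix (Fin n) (Fin n) ℝ) (P : Matrix (Fin n) (Fin nc) ℝ)
    (hA : A.PosSemidef) (hA0 : A ≠ 0)
    (hM : matNorm A (1 - M * A) ≤ 1)
    (hAc0 : Pᵀ * A * P ≠ 0)
    (Acd : Matrix (Fin nc) (Fin nc) ℝ) (hAcd : IsMP (Pᵀ * A * P) Acd)
    (hcond : {v : Fin n → ℝ | (hA.sqrt * (M + Mᵀ - Mᵀ * A * M) * hA.sqrt).mulVec v = 0} ∩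
        {v : Fin n → ℝ | (Pᵀ * (1 - A * M) * hA.sqrt).mulVec v = 0} =
      {v : Fin n → ℝ | A.mulVec v = 0})
    (Pi F : Matrix (Fin n) (Fin n) ℝ)
    (hPi : Pi = hA.sqrt * P * Acd * Pᵀ * hA.sqrt)
    (hF : F = hA.sqrt * (M + Mᵀ - Mᵀ * A * M) * hA.sqrt +
      (1 - hA.sqrt * Mᵀ * hA.sqrt) * Pi * (1 - hA.sqrt * M * hA.sqrt)) :
    matNorm A ((1 - P * Acd * Pᵀ * A) * (1 - M * A)) =
      Real.sqrt (1 - eigk F (n - A.rank + 1)) :=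
  stmt8_general A M P hA hA0 hM Acd hAcd Pi F hPi hF
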